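/- arXiv:2211.15297 — 2 statements merged into one kernel-verified Lean document; each statement's English description precedes it below -/
import Mathlib

section
/- Let r > 0 and let u, v : ℝ → ℝ be twice differentiable with (u̇(t), v̇(t)) ≠ (0,0) for all t. Then γ(t) = ψ(u(t), v(t)) is an extrinsic catenary of parabolic type (i.e., satisfies the Euler–Lagrange equations of ∫ f(u,v)‖γ̇‖ dt with f(u,v) = e^{−v/r}cosh(u/r)) if and only if its geodesic curvature κ in H²(r) satisfies κ = (1/(r‖γ̇‖))·(u̇/cosh(u/r) + v̇ sinh(u/r)) for all t. -/
noncomputable section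
open Real

/-- Minkowski inner product of `E₁³`. -/
def mink3 (X Y : ℝ × ℝ × ℝ) : ℝ := -(X.1 * Y.1) + X.2.1 * Y.2.1 + X.2.2 * Y.2.2

/-- Speed `‖γ̇‖ = √(−ẋ² + ẏ² + ż²)` of a curve `(x,y,z)` in `E₁³`. -/
def speed3 (x y z : ℝ → ℝ) (t : ℝ) : ℝ :=
  Real.sqrt (-(deriv x t) ^ 2 + (deriv y t) ^ 2 + (deriv z t) ^ 2)

/-- Geodesic curvature of the curve `(x,y,z)` in `H²(r)`. -/
def kappaH2 (r : ℝ) (x y z : ℝ → ℝ) (t : ℝ) : ℝ :=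
  -(x t * (deriv (deriv y) t * deriv z t - deriv y t * deriv (deriv z) t)
      - y t * (deriv (deriv x) t * deriv z t - deriv x t * deriv (deriv z) t)
      + z t * (deriv (deriv x) t * deriv y t - deriv x t * deriv (deriv y) t))
    / (r * (speed3 x y z t) ^ 3)

/-- First component of `γ(t) = ψ(u(t), v(t))` (semi-geodesic parametrization). -/
def gX (r : ℝ) (u v : ℝ → ℝ) (t : ℝ) : ℝ :=
  r * Real.cosh (u t / r) * Real.cosh (v t / r)

/-- Second component of `γ(t) = ψ(u(t), v(t))`. -/
def gY (r : ℝ) (u v : ℝ → ℝ) (t : ℝ) : ℝ :=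
  r * Real.cosh (u t / r) * Real.sinh (v t / r)

/-- Third component of `γ(t) = ψ(u(t), v(t))`. -/
def gZ (r : ℝ) (u v : ℝ → ℝ) (t : ℝ) : ℝ :=
  r * Real.sinh (u t / r)

/-- `‖γ̇‖` in semi-geodesic coordinates: `√(u̇² + cosh²(u/r) v̇²)`. -/
def speedSG (r : ℝ) (u v : ℝ → ℝ) (t : ℝ) : ℝ :=
  Real.sqrt ((deriv u t) ^ 2 + (Real.cosh (u t / r)) ^ 2 * (deriv v t) ^ 2)

/-- Geodesic curvature of `γ(t) = ψ(u(t), v(t))` in `H²(r)`. -/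
def kappaSG (r : ℝ) (u v : ℝ → ℝ) (t : ℝ) : ℝ :=
  kappaH2 r (gX r u v) (gY r u v) (gZ r u v) t

/-- The Euler–Lagrange equations of the functional `∫ f(u,v) ‖γ̇‖ dt` in
semi-geodesic coordinates. -/
def EulerLagrange (r : ℝ) (f : ℝ → ℝ → ℝ) (u v : ℝ → ℝ) : Prop :=
  ∀ t : ℝ,
    deriv (fun a => f a (v t)) (u t) * speedSG r u v t
        + f (u t) (v t) * Real.sinh (u t / r) * Real.cosh (u t / r) * (deriv v t) ^ 2
          / (r * speedSG r u v t)
      = deriv (fun s => f (u s) (v s) * deriv u s / speedSG r u v s) t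
    ∧ deriv (fun b => f (u t) b) (v t) * speedSG r u v t
      = deriv (fun s =>
          f (u s) (v s) * deriv v s * (Real.cosh (u s / r)) ^ 2 / speedSG r u v s) t

/-! Everything is computed in the semi-geodesic chart. Writing `W = ‖γ̇‖`, `c = cosh (u/r)`,
`s = sinh (u/r)`, the ambient formula for the geodesic curvature reduces, via
`cosh² - sinh² = 1`, to `κ = -(r c (u̇ v̈ - v̇ ü) + s v̇ (2 u̇² + c² v̇²)) / (r W³)`.
For `f = e^{-v/r} cosh (u/r)` the two Euler–Lagrange residuals are then
`e^{-v/r} c² v̇ (κ₀ - κ)` and `e^{-v/r} c² u̇ (κ - κ₀)`, where `κ₀` is the prescribed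
curvature; their proportionality to `(v̇, -u̇)` reflects the reparametrization invariance of
the functional. As `(u̇, v̇) ≠ 0`, both vanish exactly when `κ = κ₀`. -/

variable {r : ℝ} {u v : ℝ → ℝ} {t : ℝ}

lemma speedSG_sq (r : ℝ) (u v : ℝ → ℝ) (t : ℝ) :
    speedSG r u v t ^ 2 = deriv u t ^ 2 + cosh (u t / r) ^ 2 * deriv v t ^ 2 :=
  sq_sqrt (by positivity)

lemma speedSG_pos (hreg : (deriv u t, deriv v t) ≠ (0, 0)) : 0 < speedSG r u v t := by
  refine sqrt_pos.mpr ?_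
  rcases ne_or_eq (deriv u t) 0 with hU | hU
  · positivity
  · have hV : deriv v t ≠ 0 := fun hV => hreg (by rw [hU, hV])
    rw [hU]
    positivity

lemma hasDerivAt_speedSG (hu : DifferentiableAt ℝ u t) (hu2 : DifferentiableAt ℝ (deriv u) t)
    (hv2 : DifferentiableAt ℝ (deriv v) t) (hreg : (deriv u t, deriv v t) ≠ (0, 0)) :
    HasDerivAt (speedSG r u v)
      ((deriv u t * deriv (deriv u) t
        + cosh (u t / r) * sinh (u t / r) * deriv u t * deriv v t ^ 2 / r
        + cosh (u t / r) ^ 2 * deriv v t * deriv (deriv v) t) / speedSG r u v t) t := by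
  have hsq : HasDerivAt (fun s => deriv u s ^ 2 + cosh (u s / r) ^ 2 * deriv v s ^ 2) _ t :=
    (hu2.hasDerivAt.fun_pow 2).add
      (((hu.hasDerivAt.div_const r).cosh.fun_pow 2).mul (hv2.hasDerivAt.fun_pow 2))
  refine (hsq.sqrt ?_).congr_deriv ?_
  · rw [← speedSG_sq]; exact (pow_pos (speedSG_pos hreg) 2).ne'
  · simp only [speedSG]; field_simp; ring

lemma hasDerivAt_gX (hr : r ≠ 0) (hu : DifferentiableAt ℝ u t) (hv : DifferentiableAt ℝ v t) :
    HasDerivAt (gX r u v)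
      (sinh (u t / r) * deriv u t * cosh (v t / r) + cosh (u t / r) * sinh (v t / r) * deriv v t) t :=
  (((hu.hasDerivAt.div_const r).cosh.const_mul r).mul (hv.hasDerivAt.div_const r).cosh).congr_deriv
    (by field_simp)

lemma hasDerivAt_gY (hr : r ≠ 0) (hu : DifferentiableAt ℝ u t) (hv : DifferentiableAt ℝ v t) :
    HasDerivAt (gY r u v)
      (sinh (u t / r) * deriv u t * sinh (v t / r) + cosh (u t / r) * cosh (v t / r) * deriv v t) t :=
  (((hu.hasDerivAt.div_const r).cosh.const_mul r).mul (hv.hasDerivAt.div_const r).sinh).congr_deriv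
    (by field_simp)

lemma hasDerivAt_gZ (hr : r ≠ 0) (hu : DifferentiableAt ℝ u t) :
    HasDerivAt (gZ r u v) (cosh (u t / r) * deriv u t) t :=
  ((hu.hasDerivAt.div_const r).sinh.const_mul r).congr_deriv (by field_simp)

lemma hasDerivAt_deriv_gX (hr : r ≠ 0) (hu : Differentiable ℝ u) (hv : Differentiable ℝ v)
    (hu2 : DifferentiableAt ℝ (deriv u) t) (hv2 : DifferentiableAt ℝ (deriv v) t) :
    HasDerivAt (deriv (gX r u v))
      ((cosh (u t / r) * deriv u t ^ 2 / r + sinh (u t / r) * deriv (deriv u) t) * cosh (v t / r)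
        + 2 * sinh (u t / r) * deriv u t * sinh (v t / r) * deriv v t / r
        + cosh (u t / r) * cosh (v t / r) * deriv v t ^ 2 / r
        + cosh (u t / r) * sinh (v t / r) * deriv (deriv v) t) t := by
  rw [show deriv (gX r u v) = _ from funext fun s => (hasDerivAt_gX hr (hu s) (hv s)).deriv]
  have hU := (hu t).hasDerivAt.div_const r
  have hV := (hv t).hasDerivAt.div_const r
  exact (((hU.sinh.fun_mul hu2.hasDerivAt).fun_mul hV.cosh).fun_add
    ((hU.cosh.fun_mul hV.sinh).fun_mul hv2.hasDerivAt)).congr_deriv (by field_simp; ring)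

lemma hasDerivAt_deriv_gY (hr : r ≠ 0) (hu : Differentiable ℝ u) (hv : Differentiable ℝ v)
    (hu2 : DifferentiableAt ℝ (deriv u) t) (hv2 : DifferentiableAt ℝ (deriv v) t) :
    HasDerivAt (deriv (gY r u v))
      ((cosh (u t / r) * deriv u t ^ 2 / r + sinh (u t / r) * deriv (deriv u) t) * sinh (v t / r)
        + 2 * sinh (u t / r) * deriv u t * cosh (v t / r) * deriv v t / r
        + cosh (u t / r) * sinh (v t / r) * deriv v t ^ 2 / r
        + cosh (u t / r) * cosh (v t / r) * deriv (deriv v) t) t := by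
  rw [show deriv (gY r u v) = _ from funext fun s => (hasDerivAt_gY hr (hu s) (hv s)).deriv]
  have hU := (hu t).hasDerivAt.div_const r
  have hV := (hv t).hasDerivAt.div_const r
  exact (((hU.sinh.fun_mul hu2.hasDerivAt).fun_mul hV.sinh).fun_add
    ((hU.cosh.fun_mul hV.cosh).fun_mul hv2.hasDerivAt)).congr_deriv (by field_simp; ring)

lemma hasDerivAt_deriv_gZ (hr : r ≠ 0) (hu : Differentiable ℝ u)
    (hu2 : DifferentiableAt ℝ (deriv u) t) :
    HasDerivAt (deriv (gZ r u v))
      (sinh (u t / r) * deriv u t ^ 2 / r + cosh (u t / r) * deriv (deriv u) t) t := by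
  rw [show deriv (gZ r u v) = _ from funext fun s => (hasDerivAt_gZ hr (hu s)).deriv]
  exact (((hu t).hasDerivAt.div_const r).cosh.fun_mul hu2.hasDerivAt).congr_deriv
    (by field_simp)

lemma speed3_gX_gY_gZ (hr : r ≠ 0) (hu : DifferentiableAt ℝ u t) (hv : DifferentiableAt ℝ v t) :
    speed3 (gX r u v) (gY r u v) (gZ r u v) t = speedSG r u v t := by
  rw [speed3, speedSG, (hasDerivAt_gX hr hu hv).deriv, (hasDerivAt_gY hr hu hv).deriv,
    (hasDerivAt_gZ hr hu).deriv]
  congr 1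
  linear_combination (deriv v t ^ 2 * cosh (u t / r) ^ 2 - deriv u t ^ 2 * sinh (u t / r) ^ 2)
      * cosh_sq_sub_sinh_sq (v t / r) + deriv u t ^ 2 * cosh_sq_sub_sinh_sq (u t / r)

lemma kappaSG_eq (hr : r ≠ 0) (hu : Differentiable ℝ u) (hv : Differentiable ℝ v)
    (hu2 : DifferentiableAt ℝ (deriv u) t) (hv2 : DifferentiableAt ℝ (deriv v) t) :
    kappaSG r u v t
      = -(r * cosh (u t / r) * (deriv u t * deriv (deriv v) t - deriv v t * deriv (deriv u) t)
          + sinh (u t / r) * (2 * deriv u t ^ 2 * deriv v t + cosh (u t / r) ^ 2 * deriv v t ^ 3))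
        / (r * speedSG r u v t ^ 3) := by
  rw [kappaSG, kappaH2, speed3_gX_gY_gZ hr (hu t) (hv t), (hasDerivAt_gX hr (hu t) (hv t)).deriv,
    (hasDerivAt_gY hr (hu t) (hv t)).deriv, (hasDerivAt_gZ hr (hu t)).deriv,
    (hasDerivAt_deriv_gX hr hu hv hu2 hv2).deriv, (hasDerivAt_deriv_gY hr hu hv hu2 hv2).deriv,
    (hasDerivAt_deriv_gZ hr hu hu2).deriv]
  congr 2
  simp only [gX, gY, gZ]
  field_simp
  set U1 := deriv u t
  set U2 := deriv (deriv u) t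
  set V1 := deriv v t
  set V2 := deriv (deriv v) t
  set c := cosh (u t / r)
  set s := sinh (u t / r)
  set C := cosh (v t / r)
  set S := sinh (v t / r)
  have hcs : c ^ 2 - s ^ 2 = 1 := cosh_sq_sub_sinh_sq _
  have hCS : C ^ 2 - S ^ 2 = 1 := cosh_sq_sub_sinh_sq _
  linear_combination (r * c * (U1 * V2 - U2 * V1) + s * V1 * (2 * U1 ^ 2 + c ^ 2 * V1 ^ 2)) * hCS
    + (r * c * (U1 * V2 - U2 * V1) + 2 * s * U1 ^ 2 * V1) * (C ^ 2 - S ^ 2) * hcs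

def parabolicCurvature (r : ℝ) (u v : ℝ → ℝ) (t : ℝ) : ℝ :=
  1 / (r * speedSG r u v t) * (deriv u t / cosh (u t / r) + deriv v t * sinh (u t / r))

lemma eulerLagrange_u_sub (hr : r ≠ 0) (hu : Differentiable ℝ u) (hv : Differentiable ℝ v)
    (hu2 : DifferentiableAt ℝ (deriv u) t) (hv2 : DifferentiableAt ℝ (deriv v) t)
    (hreg : (deriv u t, deriv v t) ≠ (0, 0)) :
    deriv (fun a => exp (-v t / r) * cosh (a / r)) (u t) * speedSG r u v t
        + exp (-v t / r) * cosh (u t / r) * sinh (u t / r) * cosh (u t / r) * deriv v t ^ 2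
          / (r * speedSG r u v t)
      - deriv (fun s => exp (-v s / r) * cosh (u s / r) * deriv u s / speedSG r u v s) t
      = exp (-v t / r) * cosh (u t / r) ^ 2 * deriv v t
          * (parabolicCurvature r u v t - kappaSG r u v t) := by
  have hW := speedSG_pos (r := r) hreg
  have hpa : HasDerivAt (fun a => exp (-v t / r) * cosh (a / r))
      (exp (-v t / r) * (sinh (u t / r) * (1 / r))) (u t) :=
    ((hasDerivAt_id _).div_const r).cosh.const_mul _
  have hF := ((((hv t).hasDerivAt.fun_neg.div_const r).exp.fun_mul
    ((hu t).hasDerivAt.div_const r).cosh).fun_mul hu2.hasDerivAt).fun_div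
    (hasDerivAt_speedSG (hu t) hu2 hv2 hreg) hW.ne'
  rw [hpa.deriv, hF.deriv, kappaSG_eq hr hu hv hu2 hv2, parabolicCurvature]
  have hW2 := speedSG_sq r u v t
  set U2 := deriv (deriv u) t
  set V1 := deriv v t
  set c := cosh (u t / r)
  set s := sinh (u t / r)
  set W := speedSG r u v t
  set E := exp (-v t / r)
  have hc : 0 < c := cosh_pos _
  field_simp
  linear_combination E * (s * (W ^ 2 + c ^ 2 * V1 ^ 2) - r * c * U2) * hW2

lemma eulerLagrange_v_sub (hr : r ≠ 0) (hu : Differentiable ℝ u) (hv : Differentiable ℝ v)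
    (hu2 : DifferentiableAt ℝ (deriv u) t) (hv2 : DifferentiableAt ℝ (deriv v) t)
    (hreg : (deriv u t, deriv v t) ≠ (0, 0)) :
    deriv (fun b => exp (-b / r) * cosh (u t / r)) (v t) * speedSG r u v t
      - deriv (fun s => exp (-v s / r) * cosh (u s / r) * deriv v s * cosh (u s / r) ^ 2
          / speedSG r u v s) t
      = exp (-v t / r) * cosh (u t / r) ^ 2 * deriv u t
          * (kappaSG r u v t - parabolicCurvature r u v t) := by
  have hW := speedSG_pos (r := r) hreg
  have hpb : HasDerivAt (fun b => exp (-b / r) * cosh (u t / r))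
      (exp (-v t / r) * (-1 / r) * cosh (u t / r)) (v t) :=
    ((hasDerivAt_neg _).div_const r).exp.mul_const _
  have hcosh := ((hu t).hasDerivAt.div_const r).cosh
  have hF := (((((hv t).hasDerivAt.fun_neg.div_const r).exp.fun_mul hcosh).fun_mul
    hv2.hasDerivAt).fun_mul (hcosh.fun_pow 2)).fun_div
    (hasDerivAt_speedSG (hu t) hu2 hv2 hreg) hW.ne'
  rw [hpb.deriv, hF.deriv, kappaSG_eq hr hu hv hu2 hv2, parabolicCurvature]
  have hW2 := speedSG_sq r u v t
  set U1 := deriv u t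
  set V1 := deriv v t
  set V2 := deriv (deriv v) t
  set c := cosh (u t / r)
  set s := sinh (u t / r)
  set W := speedSG r u v t
  set E := exp (-v t / r)
  have hc : 0 < c := cosh_pos _
  field_simp
  linear_combination -E * (W ^ 2 + 2 * c * s * U1 * V1 + r * c ^ 2 * V2) * hW2

/-- extrinsic catenaries of parabolic type. -/
theorem extrinsic_catenary_parabolic_iff (r : ℝ) (hr : 0 < r) (u v : ℝ → ℝ)
    (hu : Differentiable ℝ u) (hu2 : Differentiable ℝ (deriv u))
    (hv : Differentiable ℝ v) (hv2 : Differentiable ℝ (deriv v))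
    (hreg : ∀ t : ℝ, (deriv u t, deriv v t) ≠ (0, 0)) :
    EulerLagrange r (fun a b => Real.exp (-b / r) * Real.cosh (a / r)) u v ↔
      ∀ t : ℝ,
        kappaSG r u v t
          = 1 / (r * speedSG r u v t)
            * (deriv u t / Real.cosh (u t / r)
              + deriv v t * Real.sinh (u t / r)) := by
  refine forall_congr' fun t => ?_
  have hu_sub := eulerLagrange_u_sub hr.ne' hu hv (hu2 t) (hv2 t) (hreg t)
  have hv_sub := eulerLagrange_v_sub hr.ne' hu hv (hu2 t) (hv2 t) (hreg t)
  rw [sub_eq_iff_eq_add] at hu_sub hv_sub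
  have hw : exp (-v t / r) * cosh (u t / r) ^ 2 ≠ 0 := by positivity
  have hreg' : ¬(deriv u t = 0 ∧ deriv v t = 0) := by simpa using hreg t
  change _ ∧ _ ↔ kappaSG r u v t = parabolicCurvature r u v t
  rw [hu_sub, hv_sub, add_eq_right, add_eq_right]
  simp only [mul_eq_zero, hw, false_or, sub_eq_zero]
  grind
end
end

section
/- Let r > 0 and let γ(t) = (x(t), y(t), z(t)) be a twice differentiable curve in H²(r) with spacelike velocity. Embed γ in H³(r) as (x, y, z, 0) and let S_H(t,θ) = (x cosh θ, y, z, x sinh θ) be the surface of revolution of hyperbolic type it generates, with unit normal ξ = (1/(r‖γ̇‖))·((yż − ẏz)cosh θ, xż − ẋz, ẋy − xẏ, (yż − ẏz)sinh θ). Then S_H has vanishing mean curvature H ≡ 0 if and only if the geodesic curvature κ of γ in H²(r) satisfies κ(t) = −(y ż − ẏ z) / (r x ‖γ̇‖) for all t. -/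
/-!
Since `g₁₂ = h₁₂ = 0`, the mean curvature of `S_H` is `(g₂₂h₁₁ + g₁₁h₂₂)/(2g₁₁g₂₂)` with
`g₁₁ = ‖γ̇‖²`, `g₂₂ = x²`, `h₂₂ = −x(yż − ẏz)/(r‖γ̇‖)`, and `h₁₁ = N/(r‖γ̇‖)`, where
`N = −r‖γ̇‖³κ` is the determinant in the numerator of `κ`. Hence
`κ + (yż − ẏz)/(r x ‖γ̇‖) = −2H` identically along the curve, and one side vanishes iff the other does.
-/

noncomputable section
open Real

/-- Minkowski inner product of `E₁⁴`. -/
def mink4 (X Y : ℝ × ℝ × ℝ × ℝ) : ℝ :=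
  -(X.1 * Y.1) + X.2.1 * Y.2.1 + X.2.2.1 * Y.2.2.1 + X.2.2.2 * Y.2.2.2

/-- Partial derivative in the first (curve) parameter of a parametrized surface. -/
def pderivT (S : ℝ → ℝ → ℝ × ℝ × ℝ × ℝ) (t θ : ℝ) : ℝ × ℝ × ℝ × ℝ :=
  (deriv (fun s => (S s θ).1) t, deriv (fun s => (S s θ).2.1) t,
    deriv (fun s => (S s θ).2.2.1) t, deriv (fun s => (S s θ).2.2.2) t)

/-- Partial derivative in the second (rotation) parameter of a parametrized surface. -/
def pderivTh (S : ℝ → ℝ → ℝ × ℝ × ℝ × ℝ) (t θ : ℝ) : ℝ × ℝ × ℝ × ℝ :=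
  (deriv (fun p => (S t p).1) θ, deriv (fun p => (S t p).2.1) θ,
    deriv (fun p => (S t p).2.2.1) θ, deriv (fun p => (S t p).2.2.2) θ)

/-- Mean curvature of a parametrized surface `S` in `H³(r)` with respect to the unit
normal field `ξ`: `H = (g₂₂h₁₁ − 2g₁₂h₁₂ + g₁₁h₂₂)/(2(g₁₁g₂₂ − g₁₂²))`. -/
def meanCurv (S ξ : ℝ → ℝ → ℝ × ℝ × ℝ × ℝ) (t θ : ℝ) : ℝ :=
  let g11 := mink4 (pderivT S t θ) (pderivT S t θ)
  let g12 := mink4 (pderivT S t θ) (pderivTh S t θ)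
  let g22 := mink4 (pderivTh S t θ) (pderivTh S t θ)
  let h11 := mink4 (pderivT (fun a b => pderivT S a b) t θ) (ξ t θ)
  let h12 := mink4 (pderivTh (fun a b => pderivT S a b) t θ) (ξ t θ)
  let h22 := mink4 (pderivTh (fun a b => pderivTh S a b) t θ) (ξ t θ)
  (g22 * h11 - 2 * g12 * h12 + g11 * h22) / (2 * (g11 * g22 - g12 ^ 2))

section HyperbolicRevolution

variable (x y z : ℝ → ℝ) (t θ : ℝ)

def hypRevolution : ℝ → ℝ → ℝ × ℝ × ℝ × ℝ :=
  fun t θ => (x t * cosh θ, y t, z t, x t * sinh θ)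

/-- The Lorentzian cross product `γ̇ ×₁ γ = diag(−1,1,1) (γ̇ × γ)`, of length `r‖γ̇‖` on `H²(r)`,
normalized and rotated with the profile. -/
def hypRevolutionNormal (r : ℝ) : ℝ → ℝ → ℝ × ℝ × ℝ × ℝ :=
  fun t θ => (r * speed3 x y z t)⁻¹ • hypRevolution
    (fun t => y t * deriv z t - deriv y t * z t)
    (fun t => x t * deriv z t - deriv x t * z t)
    (fun t => deriv x t * y t - x t * deriv y t) t θ

theorem pderivT_hypRevolution :
    pderivT (hypRevolution x y z) = hypRevolution (deriv x) (deriv y) (deriv z) := by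
  ext t θ <;> simp [pderivT, hypRevolution, deriv_mul_const_field]

theorem pderivTh_hypRevolution :
    pderivTh (hypRevolution x y z) t θ = (x t * sinh θ, 0, 0, x t * cosh θ) := by
  simp [pderivTh, hypRevolution]

theorem pderivTh_pderivTh_hypRevolution :
    pderivTh (pderivTh (hypRevolution x y z)) t θ = hypRevolution x 0 0 t θ := by
  simp [pderivTh, hypRevolution]

theorem mink4_smul_right (c : ℝ) (X Y : ℝ × ℝ × ℝ × ℝ) : mink4 X (c • Y) = c * mink4 X Y := by
  simp only [mink4, Prod.smul_fst, Prod.smul_snd, smul_eq_mul]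
  ring

/-- Hyperbolic rotation in the `(X₁, X₄)`-plane is a Lorentz isometry. -/
theorem mink4_hypRevolution (a b c d e f : ℝ → ℝ) :
    mink4 (hypRevolution a b c t θ) (hypRevolution d e f t θ)
      = -(a t * d t) + b t * e t + c t * f t := by
  simp only [mink4, hypRevolution]
  linear_combination -(a t * d t) * cosh_sq_sub_sinh_sq θ

theorem mink4_comm (X Y : ℝ × ℝ × ℝ × ℝ) : mink4 X Y = mink4 Y X := by
  simp only [mink4]
  ring

theorem mink4_hypRevolution_pderivTh (a b c d e f : ℝ → ℝ) :
    mink4 (hypRevolution a b c t θ) (pderivTh (hypRevolution d e f) t θ) = 0 := by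
  rw [pderivTh_hypRevolution]
  simp only [mink4, hypRevolution]
  ring

theorem kappaH2_sub_eq_neg_two_mul_meanCurv (r : ℝ) (hr : r ≠ 0) (hx : x t ≠ 0)
    (hsp : 0 < -(deriv x t) ^ 2 + (deriv y t) ^ 2 + (deriv z t) ^ 2) :
    kappaH2 r x y z t - -(y t * deriv z t - deriv y t * z t) / (r * x t * speed3 x y z t)
      = -2 * meanCurv (hypRevolution x y z) (hypRevolutionNormal x y z r) t θ := by
  set S := hypRevolution x y z
  have hw : speed3 x y z t ^ 2 = -(deriv x t) ^ 2 + (deriv y t) ^ 2 + (deriv z t) ^ 2 :=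
    sq_sqrt hsp.le
  have hw0 : speed3 x y z t ≠ 0 := (sqrt_pos.2 hsp).ne'
  have g11 : mink4 (pderivT S t θ) (pderivT S t θ) = speed3 x y z t ^ 2 := by
    rw [pderivT_hypRevolution, mink4_hypRevolution, hw]; ring
  have g12 : mink4 (pderivT S t θ) (pderivTh S t θ) = 0 := by
    rw [pderivT_hypRevolution, mink4_hypRevolution_pderivTh]
  have g22 : mink4 (pderivTh S t θ) (pderivTh S t θ) = x t ^ 2 := by
    rw [pderivTh_hypRevolution]; simp only [mink4]
    linear_combination x t ^ 2 * cosh_sq_sub_sinh_sq θ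
  have h11 : mink4 (pderivT (pderivT S) t θ) (hypRevolutionNormal x y z r t θ)
      = (r * speed3 x y z t)⁻¹ * (-(deriv (deriv x) t * (y t * deriv z t - deriv y t * z t))
        + deriv (deriv y) t * (x t * deriv z t - deriv x t * z t)
        + deriv (deriv z) t * (deriv x t * y t - x t * deriv y t)) := by
    rw [pderivT_hypRevolution, pderivT_hypRevolution, hypRevolutionNormal, mink4_smul_right,
      mink4_hypRevolution]
  have h12 : mink4 (pderivTh (pderivT S) t θ) (hypRevolutionNormal x y z r t θ) = 0 := by
    rw [pderivT_hypRevolution, hypRevolutionNormal, mink4_smul_right, mink4_comm,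
      mink4_hypRevolution_pderivTh, mul_zero]
  have h22 : mink4 (pderivTh (pderivTh S) t θ) (hypRevolutionNormal x y z r t θ)
      = (r * speed3 x y z t)⁻¹ * -(x t * (y t * deriv z t - deriv y t * z t)) := by
    rw [pderivTh_pderivTh_hypRevolution, hypRevolutionNormal, mink4_smul_right,
      mink4_hypRevolution, Pi.zero_apply]
    ring
  simp only [meanCurv, g11, g12, g22, h11, h12, h22, kappaH2]
  field_simp
  ring

theorem minimal_hyperbolic_iff_general (r : ℝ) (hr : 0 < r) (x y z : ℝ → ℝ)
    (hx0 : ∀ t : ℝ, 0 < x t)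
    (hsp : ∀ t : ℝ, 0 < -(deriv x t) ^ 2 + (deriv y t) ^ 2 + (deriv z t) ^ 2) :
    (∀ t θ : ℝ,
      meanCurv (fun t θ => ((x t * Real.cosh θ, y t, z t, x t * Real.sinh θ) : ℝ × ℝ × ℝ × ℝ))
        (fun t θ =>
          ((r * speed3 x y z t)⁻¹ •
            (((y t * deriv z t - deriv y t * z t) * Real.cosh θ,
              x t * deriv z t - deriv x t * z t,
              deriv x t * y t - x t * deriv y t,
              (y t * deriv z t - deriv y t * z t) * Real.sinh θ) : ℝ × ℝ × ℝ × ℝ))) t θ = 0) ↔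
      ∀ t : ℝ,
        kappaH2 r x y z t
          = -(y t * deriv z t - deriv y t * z t) / (r * x t * speed3 x y z t) := by
  have minimal_iff (t θ : ℝ) :
      meanCurv (hypRevolution x y z) (hypRevolutionNormal x y z r) t θ = 0 ↔
        kappaH2 r x y z t
          = -(y t * deriv z t - deriv y t * z t) / (r * x t * speed3 x y z t) := by
    rw [← sub_eq_zero (a := kappaH2 r x y z t),
      kappaH2_sub_eq_neg_two_mul_meanCurv x y z t θ r hr.ne' (hx0 t).ne' (hsp t)]
    simp
  exact ⟨fun hmin t => (minimal_iff t 0).1 (hmin t 0), fun hκ t θ => (minimal_iff t θ).2 (hκ t)⟩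

/-- the surface of revolution of hyperbolic type is minimal iff the
generating curve satisfies the prescribed curvature equation. -/
theorem minimal_hyperbolic_iff (r : ℝ) (hr : 0 < r) (x y z : ℝ → ℝ)
    (hx : Differentiable ℝ x) (hx2 : Differentiable ℝ (deriv x))
    (hy : Differentiable ℝ y) (hy2 : Differentiable ℝ (deriv y))
    (hz : Differentiable ℝ z) (hz2 : Differentiable ℝ (deriv z))
    (hH2 : ∀ t : ℝ, -(x t) ^ 2 + (y t) ^ 2 + (z t) ^ 2 = -r ^ 2)
    (hx0 : ∀ t : ℝ, 0 < x t)
    (hsp : ∀ t : ℝ, 0 < -(deriv x t) ^ 2 + (deriv y t) ^ 2 + (deriv z t) ^ 2) :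
    (∀ t θ : ℝ,
      meanCurv (fun t θ => ((x t * Real.cosh θ, y t, z t, x t * Real.sinh θ) : ℝ × ℝ × ℝ × ℝ))
        (fun t θ =>
          ((r * speed3 x y z t)⁻¹ •
            (((y t * deriv z t - deriv y t * z t) * Real.cosh θ,
              x t * deriv z t - deriv x t * z t,
              deriv x t * y t - x t * deriv y t,
              (y t * deriv z t - deriv y t * z t) * Real.sinh θ) : ℝ × ℝ × ℝ × ℝ))) t θ = 0) ↔
      ∀ t : ℝ,
        kappaH2 r x y z t
          = -(y t * deriv z t - deriv y t * z t) / (r * x t * speed3 x y z t) :=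
  minimal_hyperbolic_iff_general r hr x y z hx0 hsp
end HyperbolicRevolution
end
end
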